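/- arXiv:2509.22584 — 7 statements merged into one kernel-verified Lean document; each statement's English description precedes it below -/
import Mathlib

section
/- Let S, S', T, T' be finite types, f : S → S' and g : T → T' functions, and let v be a smooth vector field on ℝ^S and w a smooth vector field on ℝ^T. Then D(Sum.map f g)(δ_{S,T}(v,w)) = δ_{S',T'}(D(f)(v), D(g)(w)) as vector fields on ℝ^{S' ⊕ T'} (naturality of the laxator of D). -/
open scoped Classical

/-- The pushforward of a function `ψ : S → ℝ` along `f : S → S'`. -/
noncomputable def pushforward {S S' : Type} [Fintype S] (f : S → S') (ψ : S → ℝ) : S' → ℝ :=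
  fun s' => ∑ s : S, if f s = s' then ψ s else 0

/-- The pullback of a function `ψ : S' → ℝ` along `f : S → S'`. -/
def pullback {S S' : Type} (f : S → S') (ψ : S' → ℝ) : S → ℝ := ψ ∘ f

/-- The action of `D` on functions: `D(f)(v) = f_* ∘ v ∘ f^*`. -/
noncomputable def Dmap {S S' : Type} [Fintype S] (f : S → S')
    (v : (S → ℝ) → (S → ℝ)) : (S' → ℝ) → (S' → ℝ) :=
  pushforward f ∘ v ∘ pullback f

/-- The laxator `δ_{S,T} : D(S) × D(T) → D(S ⊕ T)`. -/
noncomputable def laxator {S T : Type} [Fintype S] [Fintype T]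
    (v : (S → ℝ) → (S → ℝ)) (w : (T → ℝ) → (T → ℝ)) :
    (S ⊕ T → ℝ) → (S ⊕ T → ℝ) :=
  fun ψ => pushforward (Sum.inl : S → S ⊕ T) (v (pullback Sum.inl ψ))
         + pushforward (Sum.inr : T → S ⊕ T) (w (pullback Sum.inr ψ))

lemma pullback_comp {S S' S'' : Type} (f : S → S') (h : S' → S'') (ψ : S'' → ℝ) :
    pullback f (pullback h ψ) = pullback (h ∘ f) ψ := rfl

lemma pushforward_comp {S S' S'' : Type} [Fintype S] [Fintype S'] (f : S → S') (h : S' → S'')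
    (ψ : S → ℝ) : pushforward h (pushforward f ψ) = pushforward (h ∘ f) ψ := by
  funext s''
  simp only [pushforward, Function.comp_apply]
  have pull : ∀ (c : Prop) [Decidable c] (g : S → ℝ),
      (if c then ∑ s, g s else 0) = ∑ s, if c then g s else 0 := by
    intros c _ g; split_ifs <;> simp
  simp only [pull]
  rw [Finset.sum_comm]
  apply Finset.sum_congr rfl
  intro s _
  have key : ∀ s' : S', (if h s' = s'' then if f s = s' then ψ s else 0 else 0)
      = (if f s = s' then if h s' = s'' then ψ s else 0 else 0) := by
    intro s'; split_ifs <;> rfl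
  simp only [key, Finset.sum_ite_eq, Finset.mem_univ, if_true]

lemma pushforward_add {S S' : Type} [Fintype S] (f : S → S') (ψ φ : S → ℝ) :
    pushforward f (ψ + φ) = pushforward f ψ + pushforward f φ := by
  funext s'
  simp only [pushforward, Pi.add_apply, ← Finset.sum_add_distrib]
  apply Finset.sum_congr rfl
  intro s _
  split_ifs <;> simp

/-- Naturality of the laxator of `D`. -/
theorem laxator_natural {S S' T T' : Type} [Fintype S] [Fintype S'] [Fintype T] [Fintype T']
    (f : S → S') (g : T → T')
    (v : (S → ℝ) → (S → ℝ)) (hv : ContDiff ℝ (⊤ : ℕ∞) v)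
    (w : (T → ℝ) → (T → ℝ)) (hw : ContDiff ℝ (⊤ : ℕ∞) w) :
    Dmap (Sum.map f g) (laxator v w) = laxator (Dmap f v) (Dmap g w) := by
  funext ψ
  simp only [Dmap, laxator, Function.comp_apply, pushforward_add, pushforward_comp,
    pullback_comp]
  have h1 : (Sum.map f g) ∘ (Sum.inl : S → S ⊕ T) = Sum.inl ∘ f := rfl
  have h2 : (Sum.map f g) ∘ (Sum.inr : T → S ⊕ T) = Sum.inr ∘ g := rfl
  have h3 : (Sum.inl : S' → S' ⊕ T') ∘ f = (Sum.map f g) ∘ Sum.inl := rfl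
  have h4 : (Sum.inr : T' → S' ⊕ T') ∘ g = (Sum.map f g) ∘ Sum.inr := rfl
  rw [h1, h2, h3, h4, ← pushforward_comp, ← pushforward_comp, ← pullback_comp, ← pullback_comp]
end

section
/- Let F = (i : X → S, o : Y → S, v) and F' = (i' : X' → S', o' : Y' → S', v') be open dynamical systems between finite types, and let F ⊗ F' be the open dynamical system from X ⊕ X' to Y ⊕ Y' with apex S ⊕ S', legs Sum.map i i' and Sum.map o o', and vector field δ_{S,S'}(v, v'). Then z ∈ ℝ^{S ⊕ S'} is a steady state of F ⊗ F' with inflows I ∈ ℝ^{X ⊕ X'} and outflows O ∈ ℝ^{Y ⊕ Y'} if and only if z ∘ inl is a steady state of F with inflows I ∘ inl and outflows O ∘ inl, and z ∘ inr is a steady state of F' with inflows I ∘ inr and outflows O ∘ inr. -/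
open scoped Classical

lemma pushforward_inl_inl {S T : Type} [Fintype S] (ψ : S → ℝ) (s : S) :
    pushforward (Sum.inl : S → S ⊕ T) ψ (Sum.inl s) = ψ s := by
  simp [pushforward]

lemma pushforward_inl_inr {S T : Type} [Fintype S] (ψ : S → ℝ) (t : T) :
    pushforward (Sum.inl : S → S ⊕ T) ψ (Sum.inr t) = 0 := by
  simp [pushforward]

lemma pushforward_inr_inl {S T : Type} [Fintype T] (ψ : T → ℝ) (s : S) :
    pushforward (Sum.inr : T → S ⊕ T) ψ (Sum.inl s) = 0 := by
  simp [pushforward]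

lemma pushforward_inr_inr {S T : Type} [Fintype T] (ψ : T → ℝ) (t : T) :
    pushforward (Sum.inr : T → S ⊕ T) ψ (Sum.inr t) = ψ t := by
  simp [pushforward]

lemma pushforward_map_inl {X X' S S' : Type} [Fintype X] [Fintype X']
    (f : X → S) (f' : X' → S') (I : X ⊕ X' → ℝ) (s : S) :
    pushforward (Sum.map f f') I (Sum.inl s) = pushforward f (I ∘ Sum.inl) s := by
  simp [pushforward, Fintype.sum_sum_type, Sum.map]

lemma pushforward_map_inr {X X' S S' : Type} [Fintype X] [Fintype X']
    (f : X → S) (f' : X' → S') (I : X ⊕ X' → ℝ) (s : S') :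
    pushforward (Sum.map f f') I (Sum.inr s) = pushforward f' (I ∘ Sum.inr) s := by
  simp [pushforward, Fintype.sum_sum_type, Sum.map]

/-- A steady state of a tensor product `F ⊗ F'` of open dynamical systems with given
inflows and outflows is the same as a pair of steady states of `F` and `F'` with the
restricted inflows and outflows. -/
theorem steady_state_tensor {X X' Y Y' S S' : Type}
    [Fintype X] [Fintype X'] [Fintype Y] [Fintype Y'] [Fintype S] [Fintype S']
    (i : X → S) (o : Y → S) (v : (S → ℝ) → (S → ℝ)) (hv : ContDiff ℝ (⊤ : ℕ∞) v)
    (i' : X' → S') (o' : Y' → S') (v' : (S' → ℝ) → (S' → ℝ)) (hv' : ContDiff ℝ (⊤ : ℕ∞) v')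
    (z : S ⊕ S' → ℝ) (I : X ⊕ X' → ℝ) (O : Y ⊕ Y' → ℝ) :
    laxator v v' z + pushforward (Sum.map i i') I - pushforward (Sum.map o o') O = 0 ↔
    (v (z ∘ Sum.inl) + pushforward i (I ∘ Sum.inl) - pushforward o (O ∘ Sum.inl) = 0 ∧
     v' (z ∘ Sum.inr) + pushforward i' (I ∘ Sum.inr) - pushforward o' (O ∘ Sum.inr) = 0) := by
  constructor
  · intro h
    constructor
    · funext s
      have := congrFun h (Sum.inl s)
      simpa [laxator, pullback, pushforward_inl_inl, pushforward_inr_inl,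
        pushforward_map_inl, Function.comp_def] using this
    · funext s
      have := congrFun h (Sum.inr s)
      simpa [laxator, pullback, pushforward_inl_inr, pushforward_inr_inr,
        pushforward_map_inr, Function.comp_def] using this
  · rintro ⟨h1, h2⟩
    funext x
    cases x with
    | inl s =>
      have := congrFun h1 s
      simpa [laxator, pullback, pushforward_inl_inl, pushforward_inr_inl,
        pushforward_map_inl, Function.comp_def] using this
    | inr s =>
      have := congrFun h2 s
      simpa [laxator, pullback, pushforward_inl_inr, pushforward_inr_inr,
        pushforward_map_inr, Function.comp_def] using this
end

section
/- The category Petri of Petri nets has all finite colimits. -/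
open CategoryTheory

/-- A Petri net: finite types of places and transitions, with source and target maps
into the free commutative monoid `ℕ[S]` on the places, realized as `S →₀ ℕ`. -/
structure PetriNet where
  S : Type
  T : Type
  [finS : Fintype S]
  [finT : Fintype T]
  src : T → (S →₀ ℕ)
  tgt : T → (S →₀ ℕ)

attribute [instance] PetriNet.finS PetriNet.finT

/-- A morphism of Petri nets. -/
@[ext]
structure PetriHom (A B : PetriNet) where
  f : A.S → B.S
  g : A.T → B.T
  src_comm : ∀ τ : A.T, B.src (g τ) = Finsupp.mapDomain f (A.src τ)
  tgt_comm : ∀ τ : A.T, B.tgt (g τ) = Finsupp.mapDomain f (A.tgt τ)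

/-- The category `Petri` of Petri nets. -/
instance : Category PetriNet where
  Hom := PetriHom
  id A := ⟨id, id, fun τ => (Finsupp.mapDomain_id).symm, fun τ => (Finsupp.mapDomain_id).symm⟩
  comp {A B C} φ φ' :=
    ⟨φ'.f ∘ φ.f, φ'.g ∘ φ.g,
      fun τ => by
        show C.src (φ'.g (φ.g τ)) = _
        rw [φ'.src_comm, φ.src_comm, Finsupp.mapDomain_comp],
      fun τ => by
        show C.tgt (φ'.g (φ.g τ)) = _
        rw [φ'.tgt_comm, φ.tgt_comm, Finsupp.mapDomain_comp]⟩
  id_comp φ := PetriHom.ext rfl rfl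
  comp_id φ := PetriHom.ext rfl rfl
  assoc φ φ' φ'' := PetriHom.ext rfl rfl

namespace PetriColim

open Limits

/-! ### Finite coproducts -/

/-- The coproduct of a finite family of Petri nets. -/
noncomputable def coprodNet {n : ℕ} (A : Fin n → PetriNet) : PetriNet where
  S := Σ i, (A i).S
  T := Σ i, (A i).T
  src := fun p => Finsupp.mapDomain (Sigma.mk p.1) ((A p.1).src p.2)
  tgt := fun p => Finsupp.mapDomain (Sigma.mk p.1) ((A p.1).tgt p.2)

/-- Coproduct injections. -/
noncomputable def coprodInj {n : ℕ} (A : Fin n → PetriNet) (i : Fin n) : A i ⟶ coprodNet A where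
  f := fun x => (⟨i, x⟩ : Σ j, (A j).S)
  g := fun x => (⟨i, x⟩ : Σ j, (A j).T)
  src_comm := fun _ => rfl
  tgt_comm := fun _ => rfl

/-- The coproduct cofan. -/
noncomputable def coprodCofan {n : ℕ} (A : Fin n → PetriNet) : Cofan A :=
  Cofan.mk (coprodNet A) (coprodInj A)

/-- The coproduct cofan is a colimit. -/
noncomputable def coprodIsColimit {n : ℕ} (A : Fin n → PetriNet) : IsColimit (coprodCofan A) := by
  refine mkCofanColimit _ (fun t => ⟨fun p => (t.inj p.1).f p.2, fun p => (t.inj p.1).g p.2,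
      fun τ => ?_, fun τ => ?_⟩) (fun t j => by refine PetriHom.ext ?_ ?_ <;> rfl)
      (fun t m hm => ?_)
  · show t.pt.src ((t.inj τ.1).g τ.2) = _
    rw [show (coprodCofan A).pt.src τ = Finsupp.mapDomain (Sigma.mk τ.1) ((A τ.1).src τ.2)
      from rfl]
    exact ((t.inj τ.1).src_comm τ.2).trans (Finsupp.mapDomain_comp (f := Sigma.mk τ.1)
      (g := fun p : Σ i, (A i).S => (t.inj p.1).f p.2))
  · show t.pt.tgt ((t.inj τ.1).g τ.2) = _
    rw [show (coprodCofan A).pt.tgt τ = Finsupp.mapDomain (Sigma.mk τ.1) ((A τ.1).tgt τ.2)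
      from rfl]
    exact ((t.inj τ.1).tgt_comm τ.2).trans (Finsupp.mapDomain_comp (f := Sigma.mk τ.1)
      (g := fun p : Σ i, (A i).S => (t.inj p.1).f p.2))
  · refine PetriHom.ext (funext fun p => ?_) (funext fun p => ?_)
    · exact congrFun (congrArg PetriHom.f (hm p.1)) p.2
    · exact congrFun (congrArg PetriHom.g (hm p.1)) p.2

instance hasColimDiscrete {n : ℕ} (F : Discrete (Fin n) ⥤ PetriNet) : HasColimit F := by
  have : HasColimit (Discrete.functor (F.obj ∘ Discrete.mk)) :=
    HasColimit.mk ⟨coprodCofan _, coprodIsColimit _⟩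
  exact hasColimit_of_iso Discrete.natIsoFunctor

/-! ### Coequalizers -/

variable {A B : PetriNet} (φ ψ : A ⟶ B)

/-- The relation on places whose quotient gives the coequalizer. -/
def rS : B.S → B.S → Prop := fun x y => ∃ a, φ.f a = x ∧ ψ.f a = y

/-- The relation on transitions whose quotient gives the coequalizer. -/
def rT : B.T → B.T → Prop := fun x y => ∃ a, φ.g a = x ∧ ψ.g a = y

lemma mk_comp : (Quot.mk (rS φ ψ)) ∘ φ.f = (Quot.mk (rS φ ψ)) ∘ ψ.f :=
  funext fun a => Quot.sound ⟨a, rfl, rfl⟩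

lemma src_lift_ok : ∀ τ τ', rT φ ψ τ τ' →
    Finsupp.mapDomain (Quot.mk (rS φ ψ)) (B.src τ)
      = Finsupp.mapDomain (Quot.mk (rS φ ψ)) (B.src τ') := by
  rintro _ _ ⟨a, rfl, rfl⟩
  rw [φ.src_comm, ψ.src_comm, ← Finsupp.mapDomain_comp, ← Finsupp.mapDomain_comp, mk_comp]

lemma tgt_lift_ok : ∀ τ τ', rT φ ψ τ τ' →
    Finsupp.mapDomain (Quot.mk (rS φ ψ)) (B.tgt τ)
      = Finsupp.mapDomain (Quot.mk (rS φ ψ)) (B.tgt τ') := by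
  rintro _ _ ⟨a, rfl, rfl⟩
  rw [φ.tgt_comm, ψ.tgt_comm, ← Finsupp.mapDomain_comp, ← Finsupp.mapDomain_comp, mk_comp]

/-- The coequalizer Petri net. -/
noncomputable def coeqNet : PetriNet where
  S := Quot (rS φ ψ)
  T := Quot (rT φ ψ)
  finS := Fintype.ofFinite _
  finT := Fintype.ofFinite _
  src := Quot.lift (fun τ => Finsupp.mapDomain (Quot.mk _) (B.src τ)) (src_lift_ok φ ψ)
  tgt := Quot.lift (fun τ => Finsupp.mapDomain (Quot.mk _) (B.tgt τ)) (tgt_lift_ok φ ψ)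

/-- The projection to the coequalizer. -/
noncomputable def coeqπ : B ⟶ coeqNet φ ψ :=
  ⟨Quot.mk _, Quot.mk _, fun _ => rfl, fun _ => rfl⟩

lemma coeq_cond : φ ≫ coeqπ φ ψ = ψ ≫ coeqπ φ ψ :=
  PetriHom.ext (funext fun a => Quot.sound ⟨a, rfl, rfl⟩)
    (funext fun a => Quot.sound ⟨a, rfl, rfl⟩)

/-- The coequalizer cofork. -/
noncomputable def coeqCofork : Cofork φ ψ := Cofork.ofπ (coeqπ φ ψ) (coeq_cond φ ψ)

/-- The cofork is a colimit. -/
noncomputable def coeqIsColimit : IsColimit (coeqCofork φ ψ) := by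
  refine Cofork.IsColimit.mk _ (fun s => ⟨
      Quot.lift s.π.f (by rintro _ _ ⟨a, rfl, rfl⟩
                          exact congrFun (congrArg PetriHom.f s.condition) a),
      Quot.lift s.π.g (by rintro _ _ ⟨a, rfl, rfl⟩
                          exact congrFun (congrArg PetriHom.g s.condition) a),
      ?_, ?_⟩) (fun s => PetriHom.ext rfl rfl) (fun s m hm => ?_)
  · refine Quot.ind fun τ => ?_
    show s.pt.src (s.π.g τ) = Finsupp.mapDomain _ (Finsupp.mapDomain (Quot.mk _) (B.src τ))
    rw [← Finsupp.mapDomain_comp]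
    exact s.π.src_comm τ
  · refine Quot.ind fun τ => ?_
    show s.pt.tgt (s.π.g τ) = Finsupp.mapDomain _ (Finsupp.mapDomain (Quot.mk _) (B.tgt τ))
    rw [← Finsupp.mapDomain_comp]
    exact s.π.tgt_comm τ
  · refine PetriHom.ext (funext (Quot.ind fun x => ?_)) (funext (Quot.ind fun x => ?_))
    · exact congrFun (congrArg PetriHom.f hm) x
    · exact congrFun (congrArg PetriHom.g hm) x

noncomputable instance hasColimPP (φ ψ : A ⟶ B) : HasColimit (parallelPair φ ψ) :=
  HasColimit.mk ⟨coeqCofork φ ψ, coeqIsColimit φ ψ⟩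

end PetriColim

/-- The category of Petri nets has all finite colimits. -/
theorem Petri_hasFiniteColimits : Limits.HasFiniteColimits PetriNet := by
  have h1 : Limits.HasCoequalizers PetriNet :=
    Limits.hasCoequalizers_of_hasColimit_parallelPair _
  have h2 : Limits.HasFiniteCoproducts PetriNet :=
    ⟨fun n => ⟨fun F => PetriColim.hasColimDiscrete F⟩⟩
  exact Limits.hasFiniteColimits_of_hasCoequalizers_and_finite_coproducts
end

section
/- Let P = (S, T, s, t, r) be a Petri net with rates and f : S → S' a function between finite types. Let f · P denote the Petri net with rates (S', T, ℕ[f] ∘ s, ℕ[f] ∘ t, r). Then massAction(f · P) = f_* ∘ massAction(P) ∘ f^* as maps ℝ^{S'} → ℝ^{S'} (naturality of the mass-action semantics). -/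
open scoped Classical

/-- A Petri net with rates: finite types of places `S` and transitions `T`, source and
target maps `T → ℕ[S]` (with `ℕ[S] = S →₀ ℕ` the free commutative monoid on `S`),
and a nonnegative rate constant for each transition. -/
structure RatePetriNet where
  S : Type
  T : Type
  [finS : Fintype S]
  [finT : Fintype T]
  src : T → (S →₀ ℕ)
  tgt : T → (S →₀ ℕ)
  rate : T → ℝ
  rate_nonneg : ∀ τ, 0 ≤ rate τ

attribute [instance] RatePetriNet.finS RatePetriNet.finT

/-- The mass-action vector field of a Petri net with rates. -/
noncomputable def massAction (P : RatePetriNet) : (P.S → ℝ) → (P.S → ℝ) :=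
  fun x j => ∑ τ : P.T,
    P.rate τ * ((P.tgt τ j : ℝ) - (P.src τ j : ℝ)) * ∏ i : P.S, x i ^ (P.src τ i)

/-- Renaming the places of a Petri net with rates along a function `f : S → S'`:
the places become `S'` and the source and target maps are composed with `ℕ[f]`. -/
noncomputable def RatePetriNet.rename (P : RatePetriNet) {S' : Type} [Fintype S'] (f : P.S → S') :
    RatePetriNet where
  S := S'
  T := P.T
  src := fun τ => Finsupp.mapDomain f (P.src τ)
  tgt := fun τ => Finsupp.mapDomain f (P.tgt τ)
  rate := P.rate
  rate_nonneg := P.rate_nonneg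

section helpers
variable {S S' : Type} [Fintype S] (f : S → S')

lemma mapDomain_apply_eq_sum (σ : S →₀ ℕ) (j' : S') :
    Finsupp.mapDomain f σ j' = ∑ s : S, if f s = j' then σ s else 0 := by
  classical
  rw [Finsupp.mapDomain, Finsupp.sum_apply, Finsupp.sum_fintype]
  · simp [Finsupp.single_apply]
  · intro i; simp

lemma prod_pow_mapDomain (x : S' → ℝ) (σ : S →₀ ℕ) [Fintype S'] :
    ∏ i' : S', x i' ^ (Finsupp.mapDomain f σ i') = ∏ i : S, x (f i) ^ σ i := by
  classical
  rw [← Finsupp.prod_fintype _ _ (by simp), ← Finsupp.prod_fintype _ _ (by simp)]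
  exact Finsupp.prod_mapDomain_index (by simp) (by intro a b₁ b₂; rw [pow_add])

end helpers

/-- Naturality of the mass-action semantics: the mass-action vector field of the
renamed Petri net with rates is `f_* ∘ massAction(P) ∘ f^*`. -/
theorem massAction_natural (P : RatePetriNet) {S' : Type} [Fintype S'] (f : P.S → S') :
    massAction (P.rename f) = pushforward f ∘ massAction P ∘ pullback f := by
  funext x j'
  simp only [massAction, RatePetriNet.rename, pushforward, pullback, Function.comp]
  have h : ∀ s : P.S, (if f s = j' then
      ∑ τ : P.T, P.rate τ * ((P.tgt τ s : ℝ) - (P.src τ s : ℝ)) *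
        ∏ i : P.S, x (f i) ^ (P.src τ i) else 0)
      = ∑ τ : P.T, if f s = j' then P.rate τ * ((P.tgt τ s : ℝ) - (P.src τ s : ℝ)) *
        ∏ i : P.S, x (f i) ^ (P.src τ i) else 0 := by
    intro s; split <;> simp
  rw [Finset.sum_congr rfl fun s _ => h s, Finset.sum_comm]
  refine Finset.sum_congr rfl fun τ _ => ?_
  erw [prod_pow_mapDomain f x (P.src τ), mapDomain_apply_eq_sum, mapDomain_apply_eq_sum]
  push_cast
  simp only [sub_mul, mul_sub, Finset.sum_sub_distrib, Finset.sum_mul, Finset.mul_sum,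
    ite_mul, mul_ite, zero_mul, mul_zero]
  rw [← Finset.sum_sub_distrib]
  exact Finset.sum_congr rfl fun s _ => by split <;> ring
end

section
/- Let P = (S, T_P, s, t, r) and Q = (S', T_Q, s', t', r') be Petri nets with rates, and let P + Q be their disjoint union: the Petri net with rates having places S ⊕ S', transitions T_P ⊕ T_Q, source map sending inl(τ) to ℕ[inl](s(τ)) and inr(τ') to ℕ[inr](s'(τ')), target map defined analogously from t and t', and rates given by r on T_P and r' on T_Q. Then massAction(P + Q) = inl_* ∘ massAction(P) ∘ inl^* + inr_* ∘ massAction(Q) ∘ inr^* as maps ℝ^{S ⊕ S'} → ℝ^{S ⊕ S'} (monoidality of the mass-action semantics: the mass-action vector field of a disjoint union is the laxator applied to the two mass-action vector fields). -/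
open scoped Classical

/-- The disjoint union of two Petri nets with rates. -/
noncomputable def RatePetriNet.sum (P Q : RatePetriNet) : RatePetriNet where
  S := P.S ⊕ Q.S
  T := P.T ⊕ Q.T
  src := Sum.elim (fun τ => Finsupp.mapDomain Sum.inl (P.src τ))
                  (fun τ' => Finsupp.mapDomain Sum.inr (Q.src τ'))
  tgt := Sum.elim (fun τ => Finsupp.mapDomain Sum.inl (P.tgt τ))
                  (fun τ' => Finsupp.mapDomain Sum.inr (Q.tgt τ'))
  rate := Sum.elim P.rate Q.rate
  rate_nonneg := fun τ => by
    cases τ with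
    | inl τ => exact P.rate_nonneg τ
    | inr τ' => exact Q.rate_nonneg τ'

/-- Monoidality of the mass-action semantics: the mass-action vector field of a
disjoint union of Petri nets with rates is the laxator applied to the mass-action
vector fields of the two summands. -/
theorem massAction_monoidal (P Q : RatePetriNet) :
    massAction (P.sum Q) =
      (fun ψ : P.S ⊕ Q.S → ℝ =>
        pushforward (Sum.inl : P.S → P.S ⊕ Q.S) (massAction P (pullback Sum.inl ψ))
        + pushforward (Sum.inr : Q.S → P.S ⊕ Q.S) (massAction Q (pullback Sum.inr ψ))) := by
  funext x j
  have hinl := Sum.inl_injective (α := P.S) (β := Q.S)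
  have hinr := Sum.inr_injective (α := P.S) (β := Q.S)
  have hnl : ∀ i : Q.S, (Sum.inr i : P.S ⊕ Q.S) ∉ Set.range (Sum.inl : P.S → P.S ⊕ Q.S) := by
    simp
  have hnr : ∀ i : P.S, (Sum.inl i : P.S ⊕ Q.S) ∉ Set.range (Sum.inr : Q.S → P.S ⊕ Q.S) := by
    simp
  unfold massAction pushforward pullback
  unfold RatePetriNet.sum
  simp only [Pi.add_apply,
    Fintype.sum_sum_type, Fintype.prod_sum_type, Sum.elim_inl, Sum.elim_inr,
    Function.comp_apply, Finsupp.mapDomain_apply hinl, Finsupp.mapDomain_apply hinr,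
    Finsupp.mapDomain_notin_range _ _ (hnl _), Finsupp.mapDomain_notin_range _ _ (hnr _),
    pow_zero, Finset.prod_const_one, mul_one, one_mul]
  cases j with
  | inl j =>
    simp [Finsupp.mapDomain_apply hinl, Finsupp.mapDomain_notin_range _ _ (hnr j),
      Finset.sum_ite_eq']
    rfl
  | inr j =>
    simp [Finsupp.mapDomain_apply hinr, Finsupp.mapDomain_notin_range _ _ (hnl j),
      Finset.sum_ite_eq']
    rfl
end

section
/- Let X be a type, A a category with all finite colimits, and G, G' : FinSet↓X ⥤ A two functors that preserve finite colimits. Given any family of isomorphisms φ_x : G(⟨x⟩) ≅ G'(⟨x⟩), one for each x ∈ X, there exists a unique natural isomorphism η : G ≅ G' whose component at ⟨x⟩ equals φ_x for every x ∈ X. (Finite-colimit-preserving extensions from the generators of the free category with finite colimits on X are unique up to a unique natural isomorphism.) -/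
open CategoryTheory

/-- An object of the category of finite sets over `X`: a finite type `F` with a map
`p : F → X`. -/
structure FinOver (X : Type) where
  F : Type
  [finF : Fintype F]
  p : F → X

attribute [instance] FinOver.finF

/-- A morphism of finite sets over `X`. -/
@[ext]
structure FinOverHom {X : Type} (A B : FinOver X) where
  h : A.F → B.F
  comm : B.p ∘ h = A.p

/-- The category `FinSet↓X` of finite sets over `X`. -/
instance (X : Type) : Category (FinOver X) where
  Hom := FinOverHom
  id A := ⟨id, rfl⟩
  comp {A B C} φ φ' := ⟨φ'.h ∘ φ.h, by
    rw [← φ.comm, ← φ'.comm]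
    rfl⟩
  id_comp φ := FinOverHom.ext rfl
  comp_id φ := FinOverHom.ext rfl
  assoc φ φ' φ'' := FinOverHom.ext rfl

/-- The generator of `FinSet↓X` corresponding to `x : X`: the one-point finite set
over `X` picking out `x`. -/
def FinOver.gen {X : Type} (x : X) : FinOver X := ⟨PUnit, fun _ => x⟩

namespace FOProof

open Limits

variable {X : Type}

def inj (B : FinOver X) (i : B.F) : FinOver.gen (B.p i) ⟶ B :=
  ⟨fun _ => i, funext fun _ => rfl⟩

def cofan (B : FinOver X) : Cofan (fun i : B.F => FinOver.gen (B.p i)) :=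
  Cofan.mk B (inj B)

def isColim (B : FinOver X) : IsColimit (cofan B) :=
  mkCofanColimit _
    (fun t => ⟨fun b => (t.inj b).h PUnit.unit,
      funext fun b => congrFun (t.inj b).comm PUnit.unit⟩)
    (fun t i => FinOverHom.ext (funext fun _ => rfl))
    (fun t m hm => FinOverHom.ext (funext fun b => by
      have := congrArg (fun (f : FinOver.gen (B.p b) ⟶ t.pt) => f.h PUnit.unit) (hm b)
      exact this))

variable {A : Type*} [Category A] [HasFiniteColimits A]

noncomputable def mapIsColim (G : FinOver X ⥤ A) [PreservesFiniteColimits G] (B : FinOver X) :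
    IsColimit (G.mapCocone (cofan B)) := by
  haveI : DecidableEq B.F := Classical.decEq _
  exact isColimitOfPreserves G (isColim B)

end FOProof
namespace FOProof
open Limits
variable {X : Type} {A : Type*} [Category A] [HasFiniteColimits A]
variable (G G' : FinOver X ⥤ A) [PreservesFiniteColimits G] [PreservesFiniteColimits G']

noncomputable def appHom (φ : ∀ x : X, G.obj (FinOver.gen x) ⟶ G'.obj (FinOver.gen x))
    (B : FinOver X) : G.obj B ⟶ G'.obj B :=
  (mapIsColim G B).desc ⟨G'.obj B,
    Discrete.natTrans fun i => φ (B.p i.as) ≫ G'.map (inj B i.as)⟩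

lemma appHom_fac (φ : ∀ x : X, G.obj (FinOver.gen x) ⟶ G'.obj (FinOver.gen x))
    (B : FinOver X) (i : B.F) :
    G.map (inj B i) ≫ appHom G G' φ B = φ (B.p i) ≫ G'.map (inj B i) :=
  (mapIsColim G B).fac _ ⟨i⟩

lemma phi_eqToHom (φ : ∀ x : X, G.obj (FinOver.gen x) ⟶ G'.obj (FinOver.gen x))
    (x y : X) (e : x = y) :
    eqToHom (congrArg G.obj (congrArg FinOver.gen e.symm)) ≫ φ x =
      φ y ≫ eqToHom (congrArg G'.obj (congrArg FinOver.gen e.symm)) := by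
  subst e; simp

lemma key (φ : ∀ x : X, G.obj (FinOver.gen x) ⟶ G'.obj (FinOver.gen x))
    (x : X) (C : FinOver X) (g : FinOver.gen x ⟶ C) :
    G.map g ≫ appHom G G' φ C = φ x ≫ G'.map g := by
  have e : C.p (g.h PUnit.unit) = x := congrFun g.comm PUnit.unit
  have hg : g = eqToHom (congrArg FinOver.gen e.symm) ≫ inj C (g.h PUnit.unit) :=
    FinOverHom.ext (funext fun u => rfl)
  rw [hg, G.map_comp, G'.map_comp, Category.assoc, appHom_fac,
    eqToHom_map G, eqToHom_map G', ← Category.assoc, ← Category.assoc,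
    phi_eqToHom G G' φ (C.p (g.h PUnit.unit)) x e]

lemma appHom_comp (φ : ∀ x : X, G.obj (FinOver.gen x) ⟶ G'.obj (FinOver.gen x))
    (G'' : FinOver X ⥤ A) [PreservesFiniteColimits G'']
    (ψ : ∀ x : X, G'.obj (FinOver.gen x) ⟶ G''.obj (FinOver.gen x)) (B : FinOver X) :
    appHom G G' φ B ≫ appHom G' G'' ψ B = appHom G G'' (fun x => φ x ≫ ψ x) B := by
  refine (mapIsColim G B).hom_ext fun ⟨i⟩ => ?_
  have h1 := appHom_fac G G' φ B i
  have h2 := key G' G'' ψ (B.p i) B (inj B i)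
  have h3 := appHom_fac G G'' (fun x => φ x ≫ ψ x) B i
  show G.map (inj B i) ≫ _ = G.map (inj B i) ≫ _
  rw [← Category.assoc, h1, Category.assoc, h2, h3, Category.assoc]

lemma appHom_id (B : FinOver X) :
    appHom G G (fun x => 𝟙 _) B = 𝟙 (G.obj B) := by
  refine (mapIsColim G B).hom_ext fun ⟨i⟩ => ?_
  show G.map (inj B i) ≫ _ = G.map (inj B i) ≫ _
  rw [appHom_fac, Category.id_comp, Category.comp_id]

noncomputable def theIso (φ : ∀ x : X, G.obj (FinOver.gen x) ≅ G'.obj (FinOver.gen x)) :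
    G ≅ G' :=
  NatIso.ofComponents
    (fun B => ⟨appHom G G' (fun x => (φ x).hom) B, appHom G' G (fun x => (φ x).inv) B,
      by rw [appHom_comp]; simpa using appHom_id G B,
      by rw [appHom_comp]; simpa using appHom_id G' B⟩)
    (fun {B C} f => by
      refine (mapIsColim G B).hom_ext fun ⟨i⟩ => ?_
      show G.map (inj B i) ≫ G.map f ≫ _ = G.map (inj B i) ≫ _ ≫ G'.map f
      rw [← Category.assoc, ← G.map_comp, key, ← Category.assoc,
        appHom_fac, Category.assoc, ← G'.map_comp])

end FOProof


open FOProof Limits in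
/-- Finite-colimit-preserving extensions from the generators of the free category
with finite colimits on `X` are unique up to a unique natural isomorphism: any family
of isomorphisms on the generators extends uniquely to a natural isomorphism. -/
theorem FinOver_extension_unique {X : Type} {A : Type*} [Category A]
    [Limits.HasFiniteColimits A] (G G' : FinOver X ⥤ A)
    [Limits.PreservesFiniteColimits G] [Limits.PreservesFiniteColimits G']
    (φ : ∀ x : X, G.obj (FinOver.gen x) ≅ G'.obj (FinOver.gen x)) :
    ∃! η : G ≅ G', ∀ x : X, η.app (FinOver.gen x) = φ x := by
  have hcomp : ∀ x : X, (theIso G G' φ).app (FinOver.gen x) = φ x := by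
    intro x
    ext
    have := key G G' (fun x => (φ x).hom) x (FinOver.gen x) (𝟙 _)
    exact (by simpa using this : appHom G G' (fun x => (φ x).hom) (FinOver.gen x) = (φ x).hom)
  refine ⟨theIso G G' φ, hcomp, fun η hη => ?_⟩
  ext1
  apply NatTrans.ext
  funext B
  refine (mapIsColim G B).hom_ext fun ⟨i⟩ => ?_
  show G.map (inj B i) ≫ η.hom.app B = G.map (inj B i) ≫ _
  rw [η.hom.naturality (inj B i)]
  have : η.hom.app (FinOver.gen (B.p i)) = (φ (B.p i)).hom := by
    rw [← hη (B.p i)]; rfl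
  rw [this]
  exact (appHom_fac G G' (fun x => (φ x).hom) B i).symm
end

section
/- Let C be a category with binary coproducts, a an object of C, ∇ : a ⨿ a → a its codiagonal, and α : (a ⨿ a) ⨿ a ≅ a ⨿ (a ⨿ a) the associativity isomorphism of the coproduct. Then the square with maps coprod.map ∇ (𝟙 a) : (a ⨿ a) ⨿ a → a ⨿ a and α.hom ≫ coprod.map (𝟙 a) ∇ : (a ⨿ a) ⨿ a → a ⨿ a out of (a ⨿ a) ⨿ a, and with the codiagonal ∇ : a ⨿ a → a as both remaining maps into a, is a pushout square; that is, IsPushout (coprod.map ∇ (𝟙 a)) (α.hom ≫ coprod.map (𝟙 a) ∇) ∇ ∇ holds. (This is the decategorified Frobenius law: in the cospan category, (1 ⊗ μ)(δ ⊗ 1) is isomorphic to δμ.) -/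
open CategoryTheory CategoryTheory.Limits

private lemma frobenius_aux {C : Type*} [Category C] [HasBinaryCoproducts C] (a : C)
    {W : C} (u v : a ⨿ a ⟶ W)
    (h : coprod.map (codiag a) (𝟙 a) ≫ u =
      ((coprod.associator a a a).hom ≫ coprod.map (𝟙 a) (codiag a)) ≫ v) :
    codiag a ≫ coprod.inl ≫ u = u ∧ codiag a ≫ coprod.inl ≫ u = v := by
  have h1 := congrArg (fun f => (coprod.inl ≫ coprod.inl : a ⟶ _) ≫ f) h
  have h2 := congrArg (fun f => (coprod.inr ≫ coprod.inl : a ⟶ _) ≫ f) h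
  have h3 := congrArg (fun f => (coprod.inr : a ⟶ _) ≫ f) h
  simp [codiag, coprod.inl_desc, coprod.inr_desc, coprod.inl_desc_assoc, coprod.inr_desc_assoc] at h1 h2 h3
  constructor <;> ext <;> simp [codiag, coprod.inl_desc, coprod.inr_desc, coprod.inl_desc_assoc, coprod.inr_desc_assoc]
  · rw [h2, ← h3]
  · exact h1
  · exact h2

/-- The decategorified Frobenius law: for any object `a` of a category with binary
coproducts, the square with maps `coprod.map ∇ (𝟙 a)` and
`α.hom ≫ coprod.map (𝟙 a) ∇` out of `(a ⨿ a) ⨿ a` (where `α` is the associativity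
isomorphism) and the codiagonal `∇ : a ⨿ a → a` as both remaining maps is a
pushout. -/
theorem isPushout_frobenius {C : Type*} [Category C] [HasBinaryCoproducts C] (a : C) :
    IsPushout (coprod.map (codiag a) (𝟙 a))
      ((coprod.associator a a a).hom ≫ coprod.map (𝟙 a) (codiag a))
      (codiag a) (codiag a) := by
  have w : coprod.map (codiag a) (𝟙 a) ≫ codiag a =
      ((coprod.associator a a a).hom ≫ coprod.map (𝟙 a) (codiag a)) ≫ codiag a := by
    ext <;> simp [codiag, coprod.inl_desc, coprod.inr_desc, coprod.inl_desc_assoc, coprod.inr_desc_assoc]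
  refine IsPushout.of_isColimit' ⟨w⟩ (PushoutCocone.IsColimit.mk w
    (fun s => coprod.inl ≫ s.inl) ?_ ?_ ?_)
  · exact fun s => (frobenius_aux a s.inl s.inr s.condition).1
  · exact fun s => (frobenius_aux a s.inl s.inr s.condition).2
  · intro s m hm₁ hm₂
    have := congrArg (fun f => (coprod.inl : a ⟶ a ⨿ a) ≫ f) hm₁
    simpa [codiag, coprod.inl_desc, coprod.inr_desc, coprod.inl_desc_assoc, coprod.inr_desc_assoc] using this
end
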